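/- The set of derivations of the Leibniz algebra L₆ is a linear subspace of End(V) of dimension 4. -/

import Mathlib

/-!
Write `d e_j = ∑ d_ij e_i`. Evaluating the Leibniz rule on the basis pairs `(e₁,e₁)`, `(e₂,e₂)`,
`(e₃,e₁)`, `(e₁,e₂)`, `(e₂,e₁)` shows that a derivation is determined by the four entries
`d₁₁, d₃₁, d₄₁, d₄₂`, with `d₂₂ = 3/2 d₁₁`, `d₃₃ = 2 d₁₁`, `d₄₄ = 3 d₁₁`, `d₄₃ = d₃₁` and all other
entries zero. Conversely every such matrix is a derivation, so the derivations are the image of a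
linear map `ℂ⁴ → End(V)`, injective since those four entries read the parameters back.
-/

/-- `V = ℂ⁴`. -/
abbrev V : Type := Fin 4 → ℂ

/-- standard basis: `e 0 = e₁`, ..., `e 3 = e₄`. -/
def e (i : Fin 4) : V := Pi.single i 1

/-- Bracket of the Leibniz algebra `L₆`:
`⟦e₁,e₁⟧ = e₃`, `⟦e₂,e₂⟧ = e₄`, `⟦e₃,e₁⟧ = e₄`, all other basis products zero. -/
def br (x y : V) : V :=
  (x 0 * y 0) • e 2 + (x 1 * y 1 + x 2 * y 0) • e 3

/-- A derivation. -/
def IsDer (d : V →ₗ[ℂ] V) : Prop :=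
  ∀ x y : V, d (br x y) = br (d x) y + br x (d y)

lemma br_apply (x y : V) : br x y = ![0, 0, x 0 * y 0, x 1 * y 1 + x 2 * y 0] := by
  funext i
  fin_cases i <;> simp [br, e]

lemma e_apply (i j : Fin 4) : e i j = if i = j then 1 else 0 := by
  simp [e, Pi.single_apply, eq_comm]

lemma br_e_zero_e_zero : br (e 0) (e 0) = e 2 := by
  funext i; fin_cases i <;> simp [br_apply, e_apply]

lemma br_e_one_e_one : br (e 1) (e 1) = e 3 := by
  funext i; fin_cases i <;> simp [br_apply, e_apply]

lemma br_e_two_e_zero : br (e 2) (e 0) = e 3 := by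
  funext i; fin_cases i <;> simp [br_apply, e_apply]

lemma br_e_zero_e_one : br (e 0) (e 1) = 0 := by
  funext i; fin_cases i <;> simp [br_apply, e_apply]

lemma br_e_one_e_zero : br (e 1) (e 0) = 0 := by
  funext i; fin_cases i <;> simp [br_apply, e_apply]

noncomputable def derivationOfParams : (Fin 4 → ℂ) →ₗ[ℂ] V →ₗ[ℂ] V :=
  LinearMap.mk₂ ℂ
    (fun c x => ![c 0 * x 0, 3 / 2 * c 0 * x 1, c 1 * x 0 + 2 * c 0 * x 2,
      c 2 * x 0 + c 3 * x 1 + c 1 * x 2 + 3 * c 0 * x 3])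
    (by intros; funext i; fin_cases i <;> simp <;> ring)
    (by intros; funext i; fin_cases i <;> simp <;> ring)
    (by intros; funext i; fin_cases i <;> simp <;> ring)
    (by intros; funext i; fin_cases i <;> simp <;> ring)

lemma derivationOfParams_apply (c : Fin 4 → ℂ) (x : V) :
    derivationOfParams c x = ![c 0 * x 0, 3 / 2 * c 0 * x 1, c 1 * x 0 + 2 * c 0 * x 2,
      c 2 * x 0 + c 3 * x 1 + c 1 * x 2 + 3 * c 0 * x 3] :=
  rfl

lemma isDer_derivationOfParams (c : Fin 4 → ℂ) : IsDer (derivationOfParams c) := by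
  intro x y
  funext i
  fin_cases i <;> simp [br_apply, derivationOfParams_apply] <;> ring

def derivationParams (d : V →ₗ[ℂ] V) : Fin 4 → ℂ :=
  ![d (e 0) 0, d (e 0) 2, d (e 0) 3, d (e 1) 3]

lemma derivationParams_derivationOfParams :
    Function.LeftInverse derivationParams derivationOfParams := by
  intro c
  funext i
  fin_cases i <;> simp [derivationParams, derivationOfParams_apply, e_apply]

namespace IsDer

variable {d : V →ₗ[ℂ] V} (h : IsDer d)
include h

lemma apply_e_two : d (e 2) = ![0, 0, 2 * d (e 0) 0, d (e 0) 2] := by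
  rw [← br_e_zero_e_zero, h]
  funext k; fin_cases k <;> simp [br_apply, e_apply]; ring

lemma apply_e_three : d (e 3) = ![0, 0, 0, 3 * d (e 0) 0] := by
  rw [← br_e_two_e_zero, h, h.apply_e_two]
  funext k; fin_cases k <;> simp [br_apply, e_apply]; ring

lemma apply_e_zero_one : d (e 0) 1 = 0 := by
  have h3 := congrFun (h (e 0) (e 1)) 3
  rw [br_e_zero_e_one, map_zero] at h3
  simpa [br_apply, e_apply] using h3.symm

lemma apply_e_one_zero : d (e 1) 0 = 0 := by
  have h2 := congrFun (h (e 0) (e 1)) 2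
  rw [br_e_zero_e_one, map_zero] at h2
  simpa [br_apply, e_apply] using h2.symm

lemma apply_e_one_two : d (e 1) 2 = 0 := by
  have h3 := congrFun (h (e 1) (e 0)) 3
  rw [br_e_one_e_zero, map_zero] at h3
  simpa [br_apply, e_apply, h.apply_e_zero_one] using h3.symm

lemma apply_e_one_one : d (e 1) 1 = 3 / 2 * d (e 0) 0 := by
  have h3 := congrFun (h (e 1) (e 1)) 3
  rw [br_e_one_e_one, h.apply_e_three] at h3
  simp [br_apply, e_apply] at h3
  linear_combination -h3 / 2

lemma derivationOfParams_derivationParams : derivationOfParams (derivationParams d) = d := by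
  refine (Pi.basisFun ℂ (Fin 4)).ext fun j => ?_
  rw [Pi.basisFun_apply]
  fin_cases j
  · change derivationOfParams _ (e 0) = d (e 0)
    funext k; fin_cases k <;>
      simp [derivationParams, derivationOfParams_apply, e_apply, h.apply_e_zero_one]
  · change derivationOfParams _ (e 1) = d (e 1)
    funext k; fin_cases k <;>
      simp [derivationParams, derivationOfParams_apply, e_apply, h.apply_e_one_zero,
        h.apply_e_one_one, h.apply_e_one_two]
  · change derivationOfParams _ (e 2) = d (e 2)
    rw [h.apply_e_two]; funext k; fin_cases k <;>
      simp [derivationParams, derivationOfParams_apply, e_apply]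
  · change derivationOfParams _ (e 3) = d (e 3)
    rw [h.apply_e_three]; funext k; fin_cases k <;>
      simp [derivationParams, derivationOfParams_apply, e_apply]

end IsDer

theorem derivations_of_L6 :
    ∃ S : Submodule ℂ (V →ₗ[ℂ] V),
      (S : Set (V →ₗ[ℂ] V)) = {d | IsDer d} ∧ Module.finrank ℂ S = 4 := by
  refine ⟨LinearMap.range derivationOfParams, ?_, ?_⟩
  · ext d
    constructor
    · rintro ⟨c, rfl⟩
      exact isDer_derivationOfParams c
    · intro h
      exact ⟨_, h.derivationOfParams_derivationParams⟩
  · rw [LinearMap.finrank_range_of_inj derivationParams_derivationOfParams.injective,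
      Module.finrank_fin_fun]
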